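/- There exists a finite simple graph Q on 17 vertices with independence number α(Q) = 2 and clique number ω(Q) = 5; consequently χ(Q) ≥ 9, Q is K_6-free, and hence F_v(2_8; 6) ≤ 17. -/

import Mathlib

open SimpleGraph

/-- The vertex Folkman number `F_v(2_r; q)`: the minimum number of vertices of a
`K_q`-free finite simple graph with chromatic number at least `r + 1`. -/
noncomputable def folkman (r q : ℕ) : ℕ :=
  sInf {n : ℕ | ∃ G : SimpleGraph (Fin n),
    G.CliqueFree q ∧ (r + 1 : ℕ∞) ≤ G.chromaticNumber}

/-- Bitmask adjacency data for the 17-vertex graph `Q17`. -/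
def qMask : Fin 17 → ℕ :=
  ![93142, 97989, 81019, 114484, 104941, 104412, 122039, 116595, 125625,
    124331, 127726, 61791, 60542, 57103, 49091, 32760, 2047]

def Q17 : SimpleGraph (Fin 17) where
  Adj i j := (qMask i).testBit j.val
  symm := ⟨by intro i j; revert i j; decide⟩
  loopless := ⟨by intro i; revert i; decide⟩

instance : DecidableRel Q17.Adj := fun i j =>
  inferInstanceAs (Decidable ((qMask i).testBit j.val))

/-- `hasCliqueB f k mask = true` iff (for a graph whose adjacency is given by the
bitmasks `f`) there is a "clique chain" of length `k` inside the vertex set `mask`. -/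
def hasCliqueB (f : Fin 17 → ℕ) : ℕ → ℕ → Bool
  | 0, _ => true
  | k + 1, mask =>
      (List.finRange 17).any fun v =>
        mask.testBit v.val && hasCliqueB f k (mask &&& f v &&& (131071 <<< (v.val + 1)))

lemma hasCliqueB_correct (f : Fin 17 → ℕ) (G : SimpleGraph (Fin 17))
    (hG : ∀ i j : Fin 17, G.Adj i j → (f i).testBit j.val) :
    ∀ (k : ℕ) (mask : ℕ), hasCliqueB f k mask = false →
      ∀ s : Finset (Fin 17), (∀ v ∈ s, mask.testBit v.val) → ¬ G.IsNClique k s := by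
  intro k
  induction k with
  | zero => intro mask h; simp [hasCliqueB] at h
  | succ k ih =>
    intro mask h s hsub hclique
    have hcard : s.card = k + 1 := hclique.card_eq
    have hne : s.Nonempty := Finset.card_pos.mp (by omega)
    set v := s.min' hne with hvdef
    have hv : v ∈ s := s.min'_mem hne
    have hvm : mask.testBit v.val = true := hsub v hv
    -- from h, the branch at v must fail
    have hb : hasCliqueB f k (mask &&& f v &&& (131071 <<< (v.val + 1))) = false := by
      simp only [hasCliqueB, List.any_eq_false] at h
      simpa [hvm] using h v (List.mem_finRange v)
    refine ih (mask &&& f v &&& (131071 <<< (v.val + 1))) hb (s.erase v) ?_ ?_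
    · intro u hu
      have huv : u ≠ v := Finset.ne_of_mem_erase hu
      have hus : u ∈ s := Finset.mem_of_mem_erase hu
      have hadj : G.Adj v u := hclique.isClique hv hus (Ne.symm huv)
      have h1 : mask.testBit u.val = true := hsub u hus
      have h2 : (f v).testBit u.val = true := hG v u hadj
      have hlt : v.val < u.val := Fin.lt_iff_val_lt_val.mp
        (lt_of_le_of_ne (s.min'_le u hus) (Ne.symm huv))
      have h3 : ((131071 : ℕ) <<< (v.val + 1)).testBit u.val = true := by
        rw [show (131071 : ℕ) = 2 ^ 17 - 1 by norm_num]
        simp only [Nat.testBit_shiftLeft, Nat.testBit_two_pow_sub_one]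
        have : u.val < 17 := u.isLt
        simp only [Bool.and_eq_true, decide_eq_true_eq]
        omega
      simp [Nat.testBit_land, h1, h2, h3]
    · exact ⟨hclique.isClique.subset (Finset.erase_subset _ _),
        by rw [Finset.card_erase_of_mem hv, hcard]; omega⟩

lemma cliqueFree_of_checker (f : Fin 17 → ℕ) (G : SimpleGraph (Fin 17))
    (hG : ∀ i j : Fin 17, G.Adj i j → (f i).testBit j.val) (k : ℕ)
    (h : hasCliqueB f k 131071 = false) : G.CliqueFree k := by
  intro s hs
  refine hasCliqueB_correct f G hG k 131071 h s (fun v _ => ?_) hs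
  have : v.val < 17 := v.isLt
  interval_cases h : v.val <;> rfl

/-- Bitmasks for the complement graph. -/
def cMask : Fin 17 → ℕ :=
  ![37928, 33080, 50048, 16579, 26114, 26627, 8968, 14348, 5190, 6228, 2321,
    67232, 66433, 65776, 65596, 65543, 63488]

lemma Q17_compl_cliqueFree : Q17ᶜ.CliqueFree 3 := by
  refine cliqueFree_of_checker cMask _ ?_ 3 (by decide)
  intro i j hij
  obtain ⟨hne, hadj⟩ := hij
  revert hne hadj
  revert i j
  decide

set_option maxHeartbeats 4000000 in
lemma Q17_cliqueFree : Q17.CliqueFree 6 := by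
  refine cliqueFree_of_checker qMask _ ?_ 6 (by decide)
  intro i j hij
  exact hij

lemma cliqueNum_eq {n k : ℕ} {G : SimpleGraph (Fin n)}
    (h1 : ∃ s, G.IsNClique k s) (h2 : G.CliqueFree (k + 1)) :
    G.cliqueNum = k := by
  obtain ⟨s, hs⟩ := h1
  refine le_antisymm ?_ ?_
  · obtain ⟨t, ht⟩ := G.exists_isNClique_cliqueNum
    by_contra hlt
    push_neg at hlt
    obtain ⟨u, hus, hucard⟩ := Finset.exists_subset_card_eq
      (ht.card_eq ▸ hlt : k + 1 ≤ t.card)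
    exact h2 u ⟨ht.isClique.subset hus, hucard⟩
  · calc k = s.card := hs.card_eq.symm
      _ ≤ G.cliqueNum := hs.isClique.card_le_cliqueNum

lemma Q17_not_colorable : ¬ Q17.Colorable 8 := by
  rintro ⟨C⟩
  obtain ⟨y, -, hy⟩ := Finset.exists_lt_card_fiber_of_mul_lt_card_of_maps_to
    (f := C) (n := 2) (s := (Finset.univ : Finset (Fin 17)))
    (t := (Finset.univ : Finset (Fin 8)))
    (fun a _ => Finset.mem_univ _) (by norm_num)
  rw [Finset.two_lt_card] at hy
  obtain ⟨a, ha, b, hb, c, hc, hab, hac, hbc⟩ := hy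
  simp only [Finset.mem_filter] at ha hb hc
  have key : Q17.Adj a b ∨ Q17.Adj a c ∨ Q17.Adj b c := by
    by_contra hcon
    push_neg at hcon
    exact Q17_compl_cliqueFree {a, b, c}
      ⟨by
        simp only [Finset.coe_insert, Finset.coe_singleton]
        intro x hx y hy hxy
        simp only [Set.mem_insert_iff, Set.mem_singleton_iff] at hx hy
        have hsymm : ∀ u w : Fin 17, ¬ Q17.Adj u w → ¬ Q17.Adj w u :=
          fun u w h hw => h hw.symm
        rcases hx with rfl | rfl | rfl <;> rcases hy with rfl | rfl | rfl <;>
          first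
            | exact absurd rfl hxy
            | exact ⟨hxy, by tauto⟩
            | exact ⟨hxy, hsymm _ _ (by tauto)⟩,
       by rw [Finset.card_insert_of_notMem (by simp [hab, hac]),
              Finset.card_insert_of_notMem (by simp [hbc]),
              Finset.card_singleton]⟩
  rcases key with h | h | h
  · exact C.valid h (ha.2.trans hb.2.symm)
  · exact C.valid h (ha.2.trans hc.2.symm)
  · exact C.valid h (hb.2.trans hc.2.symm)

lemma Q17_chrom : (9 : ℕ∞) ≤ Q17.chromaticNumber := by
  have h : ¬ Q17.chromaticNumber ≤ 8 := fun h =>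
    Q17_not_colorable (chromaticNumber_le_iff_colorable.mp (by exact_mod_cast h))
  have h8 : (8 : ℕ∞) < Q17.chromaticNumber := not_le.mp h
  exact Order.add_one_le_of_lt h8

theorem stmt_14 :
    (∃ Q : SimpleGraph (Fin 17),
        Qᶜ.cliqueNum = 2 ∧ Q.cliqueNum = 5 ∧
        (9 : ℕ∞) ≤ Q.chromaticNumber ∧ Q.CliqueFree 6) ∧
    folkman 8 6 ≤ 17 := by
  constructor
  · refine ⟨Q17, ?_, ?_, Q17_chrom, Q17_cliqueFree⟩
    · exact cliqueNum_eq ⟨{0, 3}, by decide⟩ Q17_compl_cliqueFree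
    · exact cliqueNum_eq ⟨{0, 1, 2, 6, 11}, by decide⟩ Q17_cliqueFree
  · apply Nat.sInf_le
    exact ⟨Q17, Q17_cliqueFree, by exact_mod_cast Q17_chrom⟩
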